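/- If a tile assembly system T is locally deterministic (every legal assembly sequence of T is locally deterministic), then T has a unique terminal assembly. -/
import Mathlib


open Classical

/-- A tile type: glue names and glue strengths on the four sides. -/
structure TileType (Glue : Type) where
  glueN : Glue
  glueS : Glue
  glueE : Glue
  glueW : Glue
  strN : ℕ
  strS : ℕ
  strE : ℕ
  strW : ℕ

/-- A configuration: a partial map from ℤ² to tile types. -/
abbrev TConfig (Glue : Type) := ℤ × ℤ → Option (TileType Glue)

/-- A tile assembly system: a finite set of tile types, a seed assembly,
and a symmetric binding relation on glue names. -/
structure TAS (Glue : Type) where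
  R : Glue → Glue → Bool
  Rsymm : ∀ g g', R g g' = R g' g
  tiles : Finset (TileType Glue)
  seed : TConfig Glue
  seedFinite : {p : ℤ × ℤ | seed p ≠ none}.Finite

namespace TAS

variable {Glue : Type} (S : TAS Glue)

/-- Strength of the bond between two abutting sides. -/
def bond (g g' : Glue) (s s' : ℕ) : ℕ := if S.R g g' then min s s' else 0

/-- Total binding strength of tile `t` if placed at position `p` in configuration `c`. -/
def bindStrength (c : TConfig Glue) (p : ℤ × ℤ) (t : TileType Glue) : ℕ :=
  (match c (p.1, p.2 + 1) with
    | some u => S.bond t.glueN u.glueS t.strN u.strS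
    | none => 0) +
  (match c (p.1, p.2 - 1) with
    | some u => S.bond t.glueS u.glueN t.strS u.strN
    | none => 0) +
  (match c (p.1 + 1, p.2) with
    | some u => S.bond t.glueE u.glueW t.strE u.strW
    | none => 0) +
  (match c (p.1 - 1, p.2) with
    | some u => S.bond t.glueW u.glueE t.strW u.strE
    | none => 0)

/-- Tile `t` may stably attach at empty position `p`: total binding strength at least 2. -/
def Attachable (c : TConfig Glue) (p : ℤ × ℤ) (t : TileType Glue) : Prop :=
  t ∈ S.tiles ∧ c p = none ∧ 2 ≤ S.bindStrength c p t

/-- A configuration is terminal if no tile can stably attach anywhere. -/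
def Terminal (c : TConfig Glue) : Prop := ∀ p t, ¬ S.Attachable c p t


/-- A single legal assembly step: one tile attaches stably. -/
def StepRel (c c' : TConfig Glue) : Prop :=
  ∃ p t, S.Attachable c p t ∧ c' = Function.update c p (some t)

/-- `α ⟶ β`: some legal assembly sequence starting at `α` produces `β`. -/
def Reaches : TConfig Glue → TConfig Glue → Prop := Relation.ReflTransGen S.StepRel

/-- Assemblies produced by `S` from its seed. -/
def Producible (c : TConfig Glue) : Prop := S.Reaches S.seed c

/-- Bond strength across the edge between tile `tp` at `p` and tile `tq` at `q`. -/
def edgeBond (tp tq : TileType Glue) (p q : ℤ × ℤ) : ℕ :=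
  if q = (p.1, p.2 + 1) then S.bond tp.glueN tq.glueS tp.strN tq.strS
  else if q = (p.1, p.2 - 1) then S.bond tp.glueS tq.glueN tp.strS tq.strN
  else if q = (p.1 + 1, p.2) then S.bond tp.glueE tq.glueW tp.strE tq.strW
  else if q = (p.1 - 1, p.2) then S.bond tp.glueW tq.glueE tp.strW tq.strE
  else 0

/-- A (legal, maximal) assembly sequence starting from configuration `c₀`:
at each step either a single tile attaches stably, or the current configuration
is terminal and the sequence stutters forever. -/
structure AsmSeqFrom (c₀ : TConfig Glue) where
  cfg : ℕ → TConfig Glue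
  loc : ℕ → Option (ℤ × ℤ)
  til : ℕ → Option (TileType Glue)
  init : cfg 0 = c₀
  step : ∀ n, (∃ p t, loc n = some p ∧ til n = some t ∧ S.Attachable (cfg n) p t ∧
            cfg (n + 1) = Function.update (cfg n) p (some t)) ∨
          (loc n = none ∧ til n = none ∧ S.Terminal (cfg n) ∧ cfg (n + 1) = cfg n)

/-- A legal assembly sequence of `S` starts at the seed. -/
abbrev AsmSeq := S.AsmSeqFrom S.seed

/-- The result of an assembly sequence: the union of all its stages. -/
noncomputable def result {c₀ : TConfig Glue} (α : S.AsmSeqFrom c₀) : TConfig Glue :=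
  fun p => if h : ∃ n, α.cfg n p ≠ none then α.cfg h.choose p else none

/-- The first time at which a tile appears at position `p`. -/
noncomputable def addTime {c₀ : TConfig Glue} (α : S.AsmSeqFrom c₀) (p : ℤ × ℤ) : ℕ :=
  sInf {n | α.cfg n p ≠ none}

/-- The OUT-neighbors of position `p`: adjacent occupied positions whose tile
arrived later than the tile at `p` and which bind to it with positive strength. -/
def outNeighbors {c₀ : TConfig Glue} (α : S.AsmSeqFrom c₀) (p : ℤ × ℤ) : Set (ℤ × ℤ) :=
  {q | ∃ tp tq, S.result α p = some tp ∧ S.result α q = some tq ∧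
      S.edgeBond tp tq p q > 0 ∧ S.addTime α p < S.addTime α q}

/-- The result with the tile at `p` and its OUT-neighbors deleted. -/
noncomputable def deleteOut {c₀ : TConfig Glue} (α : S.AsmSeqFrom c₀) (p : ℤ × ℤ) :
    TConfig Glue :=
  fun q => if q = p ∨ q ∈ S.outNeighbors α p then none else S.result α q

/-- Local determinism of an assembly sequence:
(1) every tile attaches with exactly the minimum required strength 2;
(2) after deleting a placed tile and its OUT-neighbors, no other tile type can
    legally bind at its location;
(3) the result is terminal. -/
def LocallyDeterministicSeq {c₀ : TConfig Glue} (α : S.AsmSeqFrom c₀) : Prop :=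
  (∀ n p t, α.loc n = some p → α.til n = some t → S.bindStrength (α.cfg n) p t = 2) ∧
  (∀ p tp, S.result α p = some tp → c₀ p = none →
    ∀ t', S.Attachable (S.deleteOut α p) p t' → t' = tp) ∧
  S.Terminal (S.result α)

/-- A tile assembly system is locally deterministic iff every legal assembly
sequence is locally deterministic. -/
def LocallyDeterministic : Prop :=
  ∀ α : S.AsmSeq, S.LocallyDeterministicSeq α

end TAS


namespace TAS

variable {Glue : Type} (S : TAS Glue)

/-- Neighbor positions of `p`: N, S, E, W. -/
def nbr (p : ℤ × ℤ) : Fin 4 → ℤ × ℤ :=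
  ![(p.1, p.2 + 1), (p.1, p.2 - 1), (p.1 + 1, p.2), (p.1 - 1, p.2)]

/-- Directional bond values of tile `t` against neighbor tile `u`. -/
def dirBond (t u : TileType Glue) : Fin 4 → ℕ :=
  ![S.bond t.glueN u.glueS t.strN u.strS,
    S.bond t.glueS u.glueN t.strS u.strN,
    S.bond t.glueE u.glueW t.strE u.strW,
    S.bond t.glueW u.glueE t.strW u.strE]

/-- Contribution of direction `d` to the binding strength. -/
def dterm (c : TConfig Glue) (p : ℤ × ℤ) (t : TileType Glue) (d : Fin 4) : ℕ :=
  match c (nbr p d) with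
  | some u => S.dirBond t u d
  | none => 0

lemma bindStrength_eq (c : TConfig Glue) (p : ℤ × ℤ) (t : TileType Glue) :
    S.bindStrength c p t =
      S.dterm c p t 0 + S.dterm c p t 1 + S.dterm c p t 2 + S.dterm c p t 3 := rfl

def dopp : Fin 4 → Fin 4 := ![1, 0, 3, 2]

lemma nbr_dopp (p : ℤ × ℤ) (d : Fin 4) : nbr (nbr p d) (dopp d) = p := by
  fin_cases d <;> simp [nbr, dopp, Prod.ext_iff]

lemma dopp_dopp (d : Fin 4) : dopp (dopp d) = d := by fin_cases d <;> rfl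

lemma nbr_ne (p : ℤ × ℤ) (d : Fin 4) : nbr p d ≠ p := by
  fin_cases d <;> simp [nbr, Prod.ext_iff]

lemma bond_symm (g g' : Glue) (s s' : ℕ) : S.bond g g' s s' = S.bond g' g s' s := by
  unfold bond; rw [S.Rsymm, Nat.min_comm]

lemma dirBond_symm (t u : TileType Glue) (d : Fin 4) :
    S.dirBond t u d = S.dirBond u t (dopp d) := by
  fin_cases d <;> simp [dirBond, dopp] <;> apply bond_symm

lemma edgeBond_nbr (t u : TileType Glue) (p : ℤ × ℤ) (d : Fin 4) :
    S.edgeBond t u p (nbr p d) = S.dirBond t u d := by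
  fin_cases d <;>
    simp [edgeBond, nbr, dirBond, Prod.ext_iff] <;>
    exact fun hh => absurd hh (by omega)

lemma edgeBond_pos_dir {t u : TileType Glue} {p q : ℤ × ℤ}
    (h : 0 < S.edgeBond t u p q) : ∃ d, q = nbr p d := by
  by_contra hc
  push_neg at hc
  have h0 := hc 0; have h1 := hc 1; have h2 := hc 2; have h3 := hc 3
  simp [nbr] at h0 h1 h2 h3
  unfold edgeBond at h
  rw [if_neg h0, if_neg h1, if_neg h2, if_neg h3] at h
  exact absurd h (by simp)

section Seq

variable {c₀ : TConfig Glue} (α : S.AsmSeqFrom c₀)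

lemma cfg_succ_mono {n : ℕ} {p : ℤ × ℤ} {t : TileType Glue}
    (hh : α.cfg n p = some t) : α.cfg (n + 1) p = some t := by
  rcases α.step n with ⟨q, u, _, _, hatt, hupd⟩ | ⟨_, _, _, hupd⟩
  · rw [hupd]
    rcases eq_or_ne p q with rfl | hne
    · rw [hatt.2.1] at hh; cases hh
    · rw [Function.update_of_ne hne]; exact hh
  · rw [hupd]; exact hh

lemma cfg_mono {m n : ℕ} (hmn : m ≤ n) {p : ℤ × ℤ} {t : TileType Glue}
    (hh : α.cfg m p = some t) : α.cfg n p = some t := by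
  induction n, hmn using Nat.le_induction with
  | base => exact hh
  | succ n _ ih => exact S.cfg_succ_mono α ih

lemma cfg_none_mono {m n : ℕ} (hmn : m ≤ n) {p : ℤ × ℤ}
    (hh : α.cfg n p = none) : α.cfg m p = none := by
  cases hc : α.cfg m p with
  | none => rfl
  | some t => simp [S.cfg_mono α hmn hc] at hh

lemma result_of_cfg {n : ℕ} {p : ℤ × ℤ} {t : TileType Glue}
    (hh : α.cfg n p = some t) : S.result α p = some t := by
  have hex : ∃ k, α.cfg k p ≠ none := ⟨n, by simp [hh]⟩
  unfold result
  rw [dif_pos hex]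
  cases hc : α.cfg hex.choose p with
  | none => exact absurd hc hex.choose_spec
  | some u =>
    have h1 := S.cfg_mono α (le_max_left n hex.choose) hh
    have h2 := S.cfg_mono α (le_max_right n hex.choose) hc
    rw [h1] at h2
    exact h2.symm

lemma cfg_of_result {p : ℤ × ℤ} {t : TileType Glue}
    (hh : S.result α p = some t) : ∃ n, α.cfg n p = some t := by
  unfold result at hh
  split_ifs at hh with hex
  exact ⟨hex.choose, hh⟩

lemma addTime_cfg {p : ℤ × ℤ} {t : TileType Glue}
    (hh : S.result α p = some t) {k : ℕ} (hk : S.addTime α p ≤ k) :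
    α.cfg k p = some t := by
  obtain ⟨n, hn⟩ := S.cfg_of_result α hh
  have hne : {m | α.cfg m p ≠ none}.Nonempty := ⟨n, by simp [hn]⟩
  have hmem : α.cfg (S.addTime α p) p ≠ none := Nat.sInf_mem hne
  cases hc : α.cfg (S.addTime α p) p with
  | none => exact absurd hc hmem
  | some u =>
    have h2 := S.result_of_cfg α hc
    rw [hh] at h2
    obtain rfl : t = u := by injection h2
    exact S.cfg_mono α hk hc

lemma cfg_lt_addTime {p : ℤ × ℤ} {k : ℕ} (hk : k < S.addTime α p) :
    α.cfg k p = none := by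
  by_contra hc
  have h2 : S.addTime α p ≤ k := Nat.sInf_le hc
  omega

lemma exists_attach_step {p : ℤ × ℤ} {t : TileType Glue}
    (hr : S.result α p = some t) (h0 : α.cfg 0 p = none) :
    ∃ j, j + 1 = S.addTime α p ∧ α.cfg j p = none ∧ α.loc j = some p ∧
      α.til j = some t ∧ S.Attachable (α.cfg j) p t ∧
      α.cfg (j + 1) = Function.update (α.cfg j) p (some t) := by
  have hpos : 0 < S.addTime α p := by
    rcases Nat.eq_zero_or_pos (S.addTime α p) with h | h
    · have h2 := S.addTime_cfg α hr (k := 0) (by omega)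
      rw [h0] at h2; cases h2
    · exact h
  obtain ⟨j, hj⟩ : ∃ j, j + 1 = S.addTime α p := ⟨S.addTime α p - 1, by omega⟩
  have hnone : α.cfg j p = none := S.cfg_lt_addTime α (by omega)
  have hsome : α.cfg (j + 1) p = some t := S.addTime_cfg α hr (by omega)
  rcases α.step j with ⟨q, u, hloc, htil, hatt, hupd⟩ | ⟨_, _, _, hupd⟩
  · rcases eq_or_ne p q with rfl | hne
    · rw [hupd, Function.update_self] at hsome
      obtain rfl : u = t := by injection hsome
      exact ⟨j, hj, hnone, hloc, htil, hatt, hupd⟩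
    · rw [hupd, Function.update_of_ne hne, hnone] at hsome; cases hsome
  · rw [hupd, hnone] at hsome; cases hsome

lemma dterm_mono {c c' : TConfig Glue}
    (hsub : ∀ q u, c q = some u → c' q = some u)
    (p : ℤ × ℤ) (t : TileType Glue) (d : Fin 4) :
    S.dterm c p t d ≤ S.dterm c' p t d := by
  unfold dterm
  cases hc : c (nbr p d) with
  | none => simp [hc]
  | some u => simp [hc, hsub _ _ hc]

lemma bindStrength_mono {c c' : TConfig Glue}
    (hsub : ∀ q u, c q = some u → c' q = some u)
    (p : ℤ × ℤ) (t : TileType Glue) :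
    S.bindStrength c p t ≤ S.bindStrength c' p t := by
  rw [S.bindStrength_eq, S.bindStrength_eq]
  exact add_le_add (add_le_add (add_le_add (S.dterm_mono hsub p t 0)
    (S.dterm_mono hsub p t 1)) (S.dterm_mono hsub p t 2)) (S.dterm_mono hsub p t 3)

end Seq

lemma sum4_lt {f g : Fin 4 → ℕ} (hle : ∀ d, f d ≤ g d) (e : Fin 4)
    (h0 : f e = 0) (h1 : 0 < g e) :
    f 0 + f 1 + f 2 + f 3 < g 0 + g 1 + g 2 + g 3 := by
  have a0 := hle 0; have a1 := hle 1; have a2 := hle 2; have a3 := hle 3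
  have he : e = 0 ∨ e = 1 ∨ e = 2 ∨ e = 3 := by fin_cases e <;> decide
  rcases he with rfl | rfl | rfl | rfl <;> omega

noncomputable def seqCfg : ℕ → TConfig Glue
  | 0 => S.seed
  | n + 1 =>
    if h : ∃ p t, S.Attachable (seqCfg n) p t then
      Function.update (seqCfg n) h.choose (some h.choose_spec.choose)
    else seqCfg n

noncomputable def canonSeq : S.AsmSeq where
  cfg := S.seqCfg
  loc := fun n =>
    if h : ∃ p t, S.Attachable (S.seqCfg n) p t then some h.choose else none
  til := fun n =>
    if h : ∃ p t, S.Attachable (S.seqCfg n) p t then some h.choose_spec.choose else none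
  init := rfl
  step := fun n => by
    by_cases h : ∃ p t, S.Attachable (S.seqCfg n) p t
    · refine Or.inl ⟨h.choose, h.choose_spec.choose, ?_, ?_, h.choose_spec.choose_spec, ?_⟩
      · exact dif_pos h
      · exact dif_pos h
      · show S.seqCfg (n + 1) = _
        rw [seqCfg, dif_pos h]
    · refine Or.inr ⟨dif_neg h, dif_neg h, fun p t hpt => h ⟨p, t, hpt⟩, ?_⟩
      show S.seqCfg (n + 1) = _
      rw [seqCfg, dif_neg h]

/-- The key lemma: for any two legal assembly sequences `α, β` of a locally
deterministic system, (a) every tile of `β` agrees with the result of `α`, and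
(b) no tile of `β` ever attaches using a bond to a tile that arrived later
(in `α`-time) than an `α`-present neighbor position. -/
lemma key (h : S.LocallyDeterministic) (α β : S.AsmSeq) (m : ℕ) :
    (∀ p t, β.cfg m p = some t → S.result α p = some t) ∧
    (∀ p q tp tq, β.cfg m q = some tq → β.cfg m p = none →
      S.result α p = some tp → 0 < S.edgeBond tp tq p q →
      ¬ S.addTime α p < S.addTime α q) := by
  induction m using Nat.strong_induction_on with
  | _ m IH =>
  rcases m with _ | m
  · constructor
    · intro p t hp
      rw [β.init, ← α.init] at hp
      exact S.result_of_cfg α hp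
    · intro p q tp tq hq hp hrp heb hlt
      rw [β.init, ← α.init] at hq
      have h2 : S.addTime α q ≤ 0 := Nat.sInf_le (by simp [hq])
      omega
  · have IHm := IH m (Nat.lt_succ_self m)
    have hA := h α
    have hTermA : S.Terminal (S.result α) := hA.2.2
    have hsub : ∀ p t, β.cfg m p = some t → S.result α p = some t := IHm.1
    rcases β.step m with ⟨p₀, t₀, hloc, htil, hatt, hupd⟩ | ⟨_, _, _, hupd⟩
    swap
    · rw [hupd]; exact IHm
    have hp₀none : β.cfg m p₀ = none := hatt.2.1
    have hge2 : 2 ≤ S.bindStrength (S.result α) p₀ t₀ :=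
      le_trans hatt.2.2 (S.bindStrength_mono hsub p₀ t₀)
    obtain ⟨tp₀, hAp₀⟩ : ∃ tp₀, S.result α p₀ = some tp₀ := by
      cases hc : S.result α p₀ with
      | none => exact absurd ⟨hatt.1, hc, hge2⟩ (hTermA p₀ t₀)
      | some tp₀ => exact ⟨tp₀, rfl⟩
    have hnotout : ∀ d u, β.cfg m (nbr p₀ d) = some u → 0 < S.dirBond t₀ u d →
        nbr p₀ d ∉ S.outNeighbors α p₀ := by
      intro d u hu hpos hout
      obtain ⟨tp', tq', hAp', hAq', heb, htime⟩ := hout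
      obtain rfl : tp₀ = tp' := Option.some.inj (hAp₀.symm.trans hAp')
      obtain rfl : u = tq' := Option.some.inj ((hsub _ _ hu).symm.trans hAq')
      exact IHm.2 p₀ (nbr p₀ d) tp₀ u hu hp₀none hAp₀ heb htime
    have hdel : S.Attachable (S.deleteOut α p₀) p₀ t₀ := by
      refine ⟨hatt.1, by simp [deleteOut], ?_⟩
      refine le_trans hatt.2.2 ?_
      rw [S.bindStrength_eq, S.bindStrength_eq]
      have hd : ∀ d : Fin 4,
          S.dterm (β.cfg m) p₀ t₀ d ≤ S.dterm (S.deleteOut α p₀) p₀ t₀ d := by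
        intro d
        unfold dterm
        cases hc : β.cfg m (nbr p₀ d) with
        | none => simp [hc]
        | some u =>
          rcases Nat.eq_zero_or_pos (S.dirBond t₀ u d) with hz | hpos
          · simp [hc, hz]
          · have hdo : S.deleteOut α p₀ (nbr p₀ d) = some u := by
              unfold deleteOut
              rw [if_neg (not_or.mpr ⟨nbr_ne p₀ d, hnotout d u hc hpos⟩)]
              exact hsub _ _ hc
            simp [hc, hdo]
      exact add_le_add (add_le_add (add_le_add (hd 0) (hd 1)) (hd 2)) (hd 3)
    have hseedp₀ : S.seed p₀ = none := by
      have h2 := S.cfg_none_mono β (Nat.zero_le m) hp₀none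
      rwa [β.init] at h2
    have ht₀ : t₀ = tp₀ := hA.2.1 p₀ tp₀ hAp₀ hseedp₀ t₀ hdel
    have ha : ∀ p t, β.cfg (m + 1) p = some t → S.result α p = some t := by
      intro p t hp
      rw [hupd] at hp
      rcases eq_or_ne p p₀ with rfl | hne
      · rw [Function.update_self] at hp
        obtain rfl : t₀ = t := Option.some.inj hp
        rw [ht₀]; exact hAp₀
      · rw [Function.update_of_ne hne] at hp
        exact hsub _ _ hp
    refine ⟨ha, ?_⟩
    intro p q tp tq hq hp hrp heb hlt
    have hpm : β.cfg m p = none := by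
      rw [hupd] at hp
      rcases eq_or_ne p p₀ with rfl | hne
      · simp at hp
      · rwa [Function.update_of_ne hne] at hp
    cases hqm : β.cfg m q with
    | some tq' =>
      obtain rfl : tq = tq' := Option.some.inj (hq.symm.trans (S.cfg_succ_mono β hqm))
      exact IHm.2 p q tp tq hqm hpm hrp heb hlt
    | none =>
      have hqp₀ : q = p₀ := by
        by_contra hne
        rw [hupd, Function.update_of_ne hne, hqm] at hq
        cases hq
      subst hqp₀
      have hq'' : β.cfg (m + 1) q = some t₀ := by rw [hupd, Function.update_self]
      obtain rfl : t₀ = tq := Option.some.inj (hq''.symm.trans hq)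
      have hAq : S.result α q = some t₀ := by rw [ht₀]; exact hAp₀
      have hb2 : S.bindStrength (β.cfg m) q t₀ = 2 := (h β).1 m q t₀ hloc htil
      have hseedq : α.cfg 0 q = none := by
        have h2 := S.cfg_none_mono β (Nat.zero_le m) hqm
        rw [β.init] at h2
        rw [α.init]; exact h2
      obtain ⟨j, hj, hjnone, hjloc, hjtil, hjatt, hjupd⟩ :=
        S.exists_attach_step α hAq hseedq
      have ha2 : S.bindStrength (α.cfg j) q t₀ = 2 := hA.1 j q t₀ hjloc hjtil
      obtain ⟨d, rfl⟩ := S.edgeBond_pos_dir heb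
      have hple : S.addTime α p ≤ j := by omega
      have hpj : α.cfg j p = some tp := S.addTime_cfg α hrp hple
      have hd : ∀ d' : Fin 4,
          S.dterm (β.cfg m) (nbr p d) t₀ d' ≤ S.dterm (α.cfg j) (nbr p d) t₀ d' := by
        intro d'
        unfold dterm
        cases hc : β.cfg m (nbr (nbr p d) d') with
        | none => simp [hc]
        | some u =>
          rcases Nat.eq_zero_or_pos (S.dirBond t₀ u d') with hz | hpos
          · simp [hc, hz]
          · have hAr : S.result α (nbr (nbr p d) d') = some u := hsub _ _ hc
            have hler := IHm.2 (nbr p d) (nbr (nbr p d) d') t₀ u hc hqm hAq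
              (by rw [S.edgeBond_nbr]; exact hpos)
            have hne' : S.addTime α (nbr (nbr p d) d') ≠ S.addTime α (nbr p d) := by
              intro he
              have h1 : α.cfg (j + 1) (nbr (nbr p d) d') = some u :=
                S.addTime_cfg α hAr (by omega)
              rw [hjupd, Function.update_of_ne (nbr_ne (nbr p d) d')] at h1
              rw [S.cfg_lt_addTime α (show j < S.addTime α (nbr (nbr p d) d') by omega)] at h1
              cases h1
            have hle'' : S.addTime α (nbr (nbr p d) d') ≤ j := by omega
            simp [hc, S.addTime_cfg α hAr hle'']
      have hp0 : S.dterm (β.cfg m) (nbr p d) t₀ (dopp d) = 0 := by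
        unfold dterm
        rw [nbr_dopp]
        simp [hpm]
      have hp1 : 0 < S.dterm (α.cfg j) (nbr p d) t₀ (dopp d) := by
        unfold dterm
        rw [nbr_dopp]
        simp only [hpj]
        have heb' : 0 < S.dirBond tp t₀ d := by rwa [S.edgeBond_nbr] at heb
        rw [S.dirBond_symm t₀ tp (dopp d), dopp_dopp]
        exact heb'
      have hcon := sum4_lt hd (dopp d) hp0 hp1
      rw [S.bindStrength_eq] at hb2 ha2
      omega

end TAS

/-- **Soloveichik–Winfree**: if a tile assembly system is locally deterministic,
then it has a unique terminal assembly. -/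
theorem locally_deterministic_unique_terminal_assembly
    {Glue : Type} (S : TAS Glue) (h : S.LocallyDeterministic) :
    ∃! c : TConfig Glue, (∃ α : S.AsmSeq, S.result α = c) ∧ S.Terminal c := by
  refine ⟨S.result S.canonSeq, ⟨⟨S.canonSeq, rfl⟩, (h S.canonSeq).2.2⟩, ?_⟩
  rintro c ⟨⟨β, rfl⟩, hterm⟩
  have hBA : ∀ p t, S.result β p = some t → S.result S.canonSeq p = some t := by
    intro p t hp
    obtain ⟨n, hn⟩ := S.cfg_of_result β hp
    exact (S.key h S.canonSeq β n).1 p t hn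
  have hAB : ∀ n p t, S.canonSeq.cfg n p = some t → S.result β p = some t := by
    intro n
    induction n with
    | zero =>
      intro p t hp
      rw [S.canonSeq.init, ← β.init] at hp
      exact S.result_of_cfg β hp
    | succ n ih =>
      intro p t hp
      rcases S.canonSeq.step n with ⟨p₀, t₀, hloc, htil, hatt, hupd⟩ | ⟨_, _, _, hupd⟩
      · rw [hupd] at hp
        rcases eq_or_ne p p₀ with rfl | hne
        · rw [Function.update_self] at hp
          obtain rfl : t₀ = t := Option.some.inj hp
          cases hB : S.result β p with
          | none =>
            have hge : 2 ≤ S.bindStrength (S.result β) p t₀ :=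
              le_trans hatt.2.2 (S.bindStrength_mono (fun q u hu => ih q u hu) p t₀)
            exact absurd ⟨hatt.1, hB, hge⟩ (hterm p t₀)
          | some x =>
            have hc1 : S.canonSeq.cfg (n + 1) p = some t₀ := by
              rw [hupd, Function.update_self]
            have h2 := S.result_of_cfg S.canonSeq hc1
            have h3 := hBA p x hB
            obtain rfl : x = t₀ := Option.some.inj (h3.symm.trans h2)
            rfl
        · rw [Function.update_of_ne hne] at hp
          exact ih p t hp
      · rw [hupd] at hp
        exact ih p t hp
  funext p
  cases hB : S.result β p with
  | some x => exact (hBA p x hB).symm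
  | none =>
    cases hA : S.result S.canonSeq p with
    | none => rfl
    | some y =>
      obtain ⟨n, hn⟩ := S.cfg_of_result S.canonSeq hA
      rw [hAB n p y hn] at hB
      cases hB
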